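/- A partition π of [n+m] into blocks of size at least 2, with n+m = t, corresponds to a rooted phylogenetic tree on n leaves if and only if ℓ(π) = m + 1; consequently, for a given partition π of [t] into blocks of size ≥ 2, the values n and m with n + m = t for which π gives a tree are uniquely determined: m = ℓ(π) - 1 and n = t - ℓ(π) + 1. -/

import Mathlib

/-- A rooted phylogenetic tree with `n` labelled leaves and `m` (unlabelled)
non-root internal vertices.  Every leaf and every internal vertex has a parent,
which is either an internal vertex or the root; the parent relation is acyclic,
and every non-leaf vertex (internal vertex or root) has at least two children. -/
structure PhyloTree (n m : ℕ) where
  parent : Fin n ⊕ Fin m → Fin m ⊕ Unit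
  acyclic : ∃ d : Fin m → ℕ, ∀ j k : Fin m, parent (Sum.inr j) = Sum.inl k → d k < d j
  outdeg : ∀ v : Fin m ⊕ Unit,
    2 ≤ (Finset.univ.filter (fun u : Fin n ⊕ Fin m => parent u = v)).card

/-- Diaconis–Holmes style numbering of the non-root vertices: leaf `i` gets
number `i`, internal vertex `j` gets number `n + j`. -/
def vnum (n m : ℕ) : Fin n ⊕ Fin m → Fin (n + m) :=
  Sum.elim (Fin.castAdd m) (Fin.natAdd n)

/-- A partition `π` of `[n+m]` corresponds to the tree `T` if its blocks are
exactly the sets of (numbers of) sibling vertices of `T`. -/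
def correspondsTo {n m : ℕ} (π : Finpartition (Finset.univ : Finset (Fin (n + m))))
    (T : PhyloTree n m) : Prop :=
  ∀ b : Finset (Fin (n + m)), b ∈ π.parts ↔
    ∃ v : Fin m ⊕ Unit,
      b = (Finset.univ.filter (fun u : Fin n ⊕ Fin m => T.parent u = v)).image (vnum n m)

/-! The sibling sets of a tree are nonempty and pairwise disjoint, so a corresponding partition has
one block per non-leaf vertex, i.e. `m + 1` blocks. Since blocks have size at least `2`,
`2 ℓ(π) ≤ n + m`; hence the truncated subtraction in `n = (n + m) - ℓ(π) + 1` is harmless and that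
equation alone is equivalent to `ℓ(π) = m + 1`.

Conversely, if `ℓ(π) = m + 1`, sort the blocks by their maxima `s₀ < ⋯ < sₘ < n + m`. Then
`sᵢ < n + i`, so making internal vertex `i` (numbered `n + i`) the parent of the `i`-th block and the
root the parent of the last one gives every internal vertex a parent with a larger number. -/

open Finset

theorem Finpartition.mul_card_parts_le_card {α : Type*} [DecidableEq α] {s : Finset α}
    (P : Finpartition s) {k : ℕ} (hk : ∀ b ∈ P.parts, k ≤ b.card) :
    k * P.parts.card ≤ s.card := by
  simpa [mul_comm, P.sum_card_parts] using card_nsmul_le_sum P.parts card k hk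

theorem Finpartition.injective_max' {α : Type*} [LinearOrder α] {s : Finset α}
    (P : Finpartition s) :
    Function.Injective fun b : P.parts => b.1.max' (P.nonempty_of_mem_parts b.2) := by
  rintro ⟨b, hb⟩ ⟨b', hb'⟩ h
  have h' : b.max' _ = b'.max' _ := h
  exact Subtype.ext (P.eq_of_mem_parts hb hb' (max'_mem _ _) (by rw [h']; exact max'_mem _ _))

theorem exists_equiv_fin_strictMono_comp {α β : Type*} [Fintype α] [LinearOrder β]
    {f : α → β} (hf : Function.Injective f) {k : ℕ} (hk : Fintype.card α = k) :
    ∃ e : Fin k ≃ α, StrictMono (f ∘ e) := by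
  let : LinearOrder α := LinearOrder.lift' f hf
  exact ⟨(Fintype.orderIsoFinOfCardEq α hk).toEquiv,
    (Fintype.orderIsoFinOfCardEq α hk).strictMono⟩

theorem Fin.val_lt_add_of_strictMono {n m : ℕ} {s : Fin (m + 1) → Fin (n + m)}
    (hs : StrictMono s) (i : Fin (m + 1)) : (s i : ℕ) < n + i := by
  induction i using Fin.reverseInduction with
  | last => simp
  | cast i ih =>
    have := hs (Fin.castSucc_lt_succ (i := i))
    simp only [Fin.val_succ, Fin.val_castSucc] at ih ⊢
    omega

lemma vnum_injective (n m : ℕ) : Function.Injective (vnum n m) :=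
  finSumFinEquiv.injective

lemma vnum_surjective (n m : ℕ) : Function.Surjective (vnum n m) :=
  finSumFinEquiv.surjective

namespace PhyloTree

variable {n m : ℕ}

def block (T : PhyloTree n m) (v : Fin m ⊕ Unit) : Finset (Fin (n + m)) :=
  (univ.filter fun u => T.parent u = v).image (vnum n m)

lemma block_injective (T : PhyloTree n m) : Function.Injective T.block := by
  intro v v' h
  obtain ⟨u, hu⟩ : (univ.filter fun u => T.parent u = v).Nonempty :=
    card_pos.mp (by have := T.outdeg v; omega)
  have hu_mem : vnum n m u ∈ T.block v' := h ▸ mem_image_of_mem (vnum n m) hu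
  obtain ⟨u', hu', hu'u⟩ := mem_image.mp hu_mem
  rw [mem_filter] at hu hu'
  rw [← hu.2, ← hu'.2, vnum_injective n m hu'u]

end PhyloTree

section

variable {n m : ℕ} {π : Finpartition (univ : Finset (Fin (n + m)))}

lemma correspondsTo_iff_parts_eq {T : PhyloTree n m} :
    correspondsTo π T ↔ π.parts = univ.image T.block := by
  simp only [correspondsTo, Finset.ext_iff, mem_image, mem_univ, true_and, PhyloTree.block,
    eq_comm]

lemma card_parts_of_correspondsTo {T : PhyloTree n m} (hT : correspondsTo π T) :
    π.parts.card = m + 1 := by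
  rw [correspondsTo_iff_parts_eq.mp hT, card_image_of_injective _ T.block_injective]
  simp

variable (π) (e : Fin m ⊕ Unit ≃ π.parts)

def partParent (u : Fin n ⊕ Fin m) : Fin m ⊕ Unit :=
  e.symm ⟨π.part (vnum n m u), π.part_mem.2 (mem_univ _)⟩

variable {π e}

lemma partParent_eq_iff {u : Fin n ⊕ Fin m} {v : Fin m ⊕ Unit} :
    partParent π e u = v ↔ vnum n m u ∈ (e v : Finset (Fin (n + m))) := by
  rw [partParent, Equiv.symm_apply_eq, Subtype.ext_iff, π.part_eq_iff_mem (e v).2]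

lemma image_vnum_filter_partParent (v : Fin m ⊕ Unit) :
    (univ.filter fun u => partParent π e u = v).image (vnum n m) = e v := by
  ext x
  obtain ⟨u, rfl⟩ := vnum_surjective n m x
  simp [partParent_eq_iff, (vnum_injective n m).eq_iff]

def PhyloTree.ofPartition (hblocks : ∀ b ∈ π.parts, 2 ≤ b.card)
    (he : ∀ k : Fin m, ∀ x ∈ (e (.inl k) : Finset (Fin (n + m))), x < vnum n m (.inr k)) :
    PhyloTree n m where
  parent := partParent π e
  acyclic := by
    refine ⟨fun j => m - j, fun j k hjk => ?_⟩
    have hjk : n + (j : ℕ) < n + k := he k _ (partParent_eq_iff.mp hjk)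
    have := k.isLt
    show m - k < m - j
    omega
  outdeg v := by
    rw [← card_image_of_injective _ (vnum_injective n m), image_vnum_filter_partParent]
    exact hblocks _ (e v).2

lemma correspondsTo_ofPartition (hblocks : ∀ b ∈ π.parts, 2 ≤ b.card)
    (he : ∀ k : Fin m, ∀ x ∈ (e (.inl k) : Finset (Fin (n + m))), x < vnum n m (.inr k)) :
    correspondsTo π (PhyloTree.ofPartition hblocks he) := by
  rw [correspondsTo_iff_parts_eq]
  ext b
  simp only [PhyloTree.block, PhyloTree.ofPartition, image_vnum_filter_partParent, mem_image,
    mem_univ, true_and]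
  exact ⟨fun hb => ⟨e.symm ⟨b, hb⟩, by simp⟩, fun ⟨v, hv⟩ => hv ▸ (e v).2⟩

variable (π)

lemma exists_equiv_parts_lt_vnum (hcard : π.parts.card = m + 1) :
    ∃ e : Fin m ⊕ Unit ≃ π.parts,
      ∀ k : Fin m, ∀ x ∈ (e (.inl k) : Finset (Fin (n + m))), x < vnum n m (.inr k) := by
  obtain ⟨o, ho⟩ := exists_equiv_fin_strictMono_comp π.injective_max'
    (k := m + 1) (by rwa [Fintype.card_coe])
  refine ⟨((Equiv.sumCongr (.refl _) finOneEquiv.symm).trans finSumFinEquiv).trans o,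
    fun k x hx => ?_⟩
  simp only [Equiv.trans_apply, Equiv.sumCongr_apply, Sum.map_inl, Equiv.refl_apply,
    finSumFinEquiv_apply_left] at hx
  exact lt_of_le_of_lt (le_max' _ x hx) (Fin.val_lt_add_of_strictMono ho (Fin.castAdd 1 k))

end

/-- A partition `π` of `[n+m]` into blocks of size at least 2 corresponds to a
rooted phylogenetic tree on `n` leaves and `m` non-root internal vertices if
and only if `ℓ(π) = m + 1`; consequently `m` and `n` are uniquely determined by
`π`: `m = ℓ(π) - 1` and `n = (n + m) - ℓ(π) + 1`. -/
theorem tree_partition_iff (n m : ℕ)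
    (π : Finpartition (Finset.univ : Finset (Fin (n + m))))
    (hblocks : ∀ b ∈ π.parts, 2 ≤ b.card) :
    (∃ T : PhyloTree n m, correspondsTo π T) ↔
      (m = π.parts.card - 1 ∧ n = (n + m) - π.parts.card + 1) := by
  have hsize : 2 * π.parts.card ≤ n + m := by
    simpa using π.mul_card_parts_le_card hblocks
  constructor
  · rintro ⟨T, hT⟩
    have := card_parts_of_correspondsTo hT
    omega
  · rintro ⟨-, hn⟩
    obtain ⟨e, he⟩ := exists_equiv_parts_lt_vnum π (by omega)
    exact ⟨.ofPartition hblocks he, correspondsTo_ofPartition hblocks he⟩
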